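/- arXiv:2104.12045 — 8 statements merged into one kernel-verified Lean document; each statement's English description precedes it below -/
import Mathlib

section
/- Let Φ be a Young function satisfying the Δ₂-condition. Then there exist q ∈ (0,∞) and C ∈ [1,∞) such that for all 0 < t ≤ s, (1/t)·Φ⁻¹(1/t)^{-q} ≤ C·(1/s)·Φ⁻¹(1/s)^{-q}. -/
open MeasureTheory ENNReal NNReal

noncomputable section

/-- A Young function `Φ : [0,∞] → [0,∞]`: increasing, convex, `Φ(0)=0`, `Φ(∞)=∞`,
`lim_{t→0}Φ(t)=0`, with `a(Φ)<∞` and `b(Φ)>0`. -/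
structure YoungFunction (Φ : ℝ≥0∞ → ℝ≥0∞) : Prop where
  mono : Monotone Φ
  map_zero : Φ 0 = 0
  map_top : Φ ⊤ = ⊤
  convex : ∀ (a b : ℝ≥0) (x y : ℝ≥0∞), a + b = 1 →
    Φ ((a : ℝ≥0∞) * x + (b : ℝ≥0∞) * y) ≤ (a : ℝ≥0∞) * Φ x + (b : ℝ≥0∞) * Φ y
  tendsto_zero : Filter.Tendsto Φ (nhdsWithin 0 (Set.Ioi 0)) (nhds 0)
  exists_pos : ∃ t : ℝ≥0∞, t ≠ ⊤ ∧ 0 < Φ t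
  exists_finite : ∃ t : ℝ≥0∞, 0 < t ∧ Φ t < ⊤

/-- The generalized inverse `Φ⁻¹(u) = inf{t ≥ 0 : Φ(t) > u}` (with `inf ∅ = ∞`,
so `Φ⁻¹(∞) = ∞`). -/
def yinv (Φ : ℝ≥0∞ → ℝ≥0∞) (u : ℝ≥0∞) : ℝ≥0∞ := sInf {t | u < Φ t}

/-!
The Δ₂-condition `Φ(2r) ≤ kΦ(r)` gives `2ⁿΦ⁻¹(v) ≤ Φ⁻¹(kⁿv)`. With `q = log₂ k` this
reads `kⁿΦ⁻¹(v)^q ≤ Φ⁻¹(kⁿv)^q`, so `u ↦ u / Φ⁻¹(u)^q` drops by a factor at most `k` between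
consecutive powers `kⁿv ≤ u < kⁿ⁺¹v`, i.e. it is almost decreasing with constant `k`.
-/

theorem ENNReal.div_le_div_of_mul_le {a b c d : ℝ≥0∞} (hd0 : d ≠ 0) (hd : d ≠ ⊤)
    (h : a * b ≤ d * c) : a / c ≤ d / b := by
  rw [ENNReal.le_div_iff_mul_le (.inr hd0) (.inr hd), div_eq_mul_inv, mul_right_comm,
    ← div_eq_mul_inv, ENNReal.div_le_iff_le_mul (.inr hd) (.inr hd0)]
  exact h

theorem ENNReal.exists_one_le_eq_mul {u v : ℝ≥0∞} (hvu : v ≤ u) (hu : u ≠ ⊤) (hv : v ≠ 0) :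
    ∃ c : ℝ≥0, 1 ≤ c ∧ u = c * v := by
  have hv' : v ≠ ⊤ := ne_top_of_le_ne_top hu hvu
  have hfin : u / v ≠ ⊤ := ENNReal.div_ne_top hu hv
  refine ⟨(u / v).toNNReal, ?_, ?_⟩
  · rw [← ENNReal.coe_le_coe, ENNReal.coe_toNNReal hfin,
      ENNReal.le_div_iff_mul_le (.inl hv) (.inl hv'), ENNReal.coe_one, one_mul]
    exact hvu
  · rw [ENNReal.coe_toNNReal hfin, ENNReal.div_mul_cancel hv hv']

theorem yinv_mono (Φ : ℝ≥0∞ → ℝ≥0∞) : Monotone (yinv Φ) := fun _ _ h =>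
  sInf_le_sInf fun _ ht => lt_of_le_of_lt h ht

section DeltaTwo

variable {Φ : ℝ≥0∞ → ℝ≥0∞} {k : ℝ≥0} (hΦ0 : Φ 0 = 0)
  (hΔ : ∀ r : ℝ≥0∞, 0 < r → Φ (2 * r) ≤ (k : ℝ≥0∞) * Φ r)
include hΦ0 hΔ

theorem two_mul_yinv_le_yinv_mul (hk : k ≠ 0) (u : ℝ≥0∞) : 2 * yinv Φ u ≤ yinv Φ (k * u) := by
  refine le_sInf fun t (ht : k * u < Φ t) => ?_
  have ht0 : t ≠ 0 := by
    rintro rfl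
    simp [hΦ0] at ht
  have hhalf : Φ t ≤ k * Φ (t / 2) := by
    simpa [ENNReal.mul_div_cancel'] using hΔ (t / 2) (ENNReal.div_pos ht0 ofNat_ne_top)
  have hu : u < Φ (t / 2) :=
    (ENNReal.mul_lt_mul_iff_right (by exact_mod_cast hk) coe_ne_top).mp (ht.trans_le hhalf)
  rw [mul_comm, ← ENNReal.le_div_iff_mul_le (.inl two_ne_zero) (.inl ofNat_ne_top)]
  exact sInf_le hu

theorem two_pow_mul_yinv_le_yinv_pow_mul (hk : k ≠ 0) (n : ℕ) (u : ℝ≥0∞) :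
    2 ^ n * yinv Φ u ≤ yinv Φ (k ^ n * u) := by
  induction n with
  | zero => simp
  | succ n ih =>
    calc 2 ^ (n + 1) * yinv Φ u = 2 * (2 ^ n * yinv Φ u) := by ring
      _ ≤ 2 * yinv Φ (k ^ n * u) := by gcongr
      _ ≤ yinv Φ (k * (k ^ n * u)) := two_mul_yinv_le_yinv_mul hΦ0 hΔ hk _
      _ = yinv Φ (k ^ (n + 1) * u) := by ring_nf

theorem mul_yinv_rpow_le_mul_yinv_mul_rpow (hk : 1 < k) {q : ℝ} (hq : 0 ≤ q)
    (hkq : (k : ℝ≥0∞) ≤ 2 ^ q)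
    {c : ℝ≥0} (hc : 1 ≤ c) (v : ℝ≥0∞) :
    c * yinv Φ v ^ q ≤ k * yinv Φ (c * v) ^ q := by
  obtain ⟨n, hkn, hnc⟩ := exists_nat_pow_near hc hk
  have hpow : (k : ℝ≥0∞) ^ n * yinv Φ v ^ q ≤ yinv Φ (c * v) ^ q :=
    calc (k : ℝ≥0∞) ^ n * yinv Φ v ^ q ≤ ((2 : ℝ≥0∞) ^ q) ^ n * yinv Φ v ^ q := by gcongr
      _ = (2 ^ n * yinv Φ v) ^ q := by
        rw [ENNReal.mul_rpow_of_nonneg _ _ hq, ← ENNReal.rpow_natCast, ← ENNReal.rpow_natCast,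
          ← ENNReal.rpow_mul, ← ENNReal.rpow_mul, mul_comm (n : ℝ) q]
      _ ≤ yinv Φ (k ^ n * v) ^ q :=
        ENNReal.rpow_le_rpow (two_pow_mul_yinv_le_yinv_pow_mul hΦ0 hΔ (by positivity) n v) hq
      _ ≤ yinv Φ (c * v) ^ q := by
        gcongr
        exact yinv_mono Φ (by gcongr; exact_mod_cast hkn)
  calc (c : ℝ≥0∞) * yinv Φ v ^ q ≤ k ^ (n + 1) * yinv Φ v ^ q := by
        gcongr; exact_mod_cast hnc.le
    _ = k * (k ^ n * yinv Φ v ^ q) := by ring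
    _ ≤ k * yinv Φ (c * v) ^ q := by gcongr

end DeltaTwo

/-- Delta2 implies an almost-decreasing estimate. -/
theorem stmt4 (Φ : ℝ≥0∞ → ℝ≥0∞) (hΦ : YoungFunction Φ)
    (hΔ : ∃ k : ℝ≥0, 1 < k ∧ ∀ r : ℝ≥0∞, 0 < r → Φ (2 * r) ≤ (k : ℝ≥0∞) * Φ r) :
    ∃ (q : ℝ) (C : ℝ≥0), 0 < q ∧ 1 ≤ C ∧
      ∀ t s : ℝ≥0∞, 0 < t → t ≤ s → s ≠ ⊤ →
        t⁻¹ * (yinv Φ t⁻¹) ^ (-q) ≤ (C : ℝ≥0∞) * (s⁻¹ * (yinv Φ s⁻¹) ^ (-q)) := by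
  obtain ⟨k, hk, hΔ⟩ := hΔ
  set q := Real.logb 2 k
  have hq : 0 < q := Real.logb_pos one_lt_two (by exact_mod_cast hk)
  have hkq : (k : ℝ≥0∞) = 2 ^ q := by
    rw [← ENNReal.coe_ofNat, ← ENNReal.coe_rpow_of_ne_zero two_ne_zero, ENNReal.coe_inj,
      ← NNReal.coe_inj, NNReal.coe_rpow, NNReal.coe_ofNat,
      Real.rpow_logb two_pos (by norm_num) (by positivity)]
  refine ⟨q, k, hq, hk.le, fun t s ht hts hs => ?_⟩
  obtain ⟨c, hc, htc⟩ := ENNReal.exists_one_le_eq_mul (ENNReal.inv_le_inv.mpr hts)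
    (ENNReal.inv_ne_top.mpr ht.ne') (ENNReal.inv_ne_zero.mpr hs)
  have key := mul_yinv_rpow_le_mul_yinv_mul_rpow hΦ.map_zero hΔ hk hq.le hkq.le hc s⁻¹
  rw [htc, ENNReal.rpow_neg, ENNReal.rpow_neg]
  calc (c : ℝ≥0∞) * s⁻¹ * (yinv Φ (c * s⁻¹) ^ q)⁻¹ = s⁻¹ * (c / yinv Φ (c * s⁻¹) ^ q) := by
        rw [div_eq_mul_inv]; ring
    _ ≤ s⁻¹ * (k / yinv Φ s⁻¹ ^ q) := by
        gcongr s⁻¹ * ?_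
        exact ENNReal.div_le_div_of_mul_le (by positivity) coe_ne_top key
    _ = k * (s⁻¹ * (yinv Φ s⁻¹ ^ q)⁻¹) := by rw [div_eq_mul_inv]; ring
end
end

section
/- Let Φ be a Young function. If there exist q ∈ (0,∞) and C ∈ [1,∞) such that (1/t)·Φ⁻¹(1/t)^{-q} ≤ C·(1/s)·Φ⁻¹(1/s)^{-q} for all 0 < t ≤ s, then Φ satisfies the Δ₂-condition. -/
/-!
Substituting `u = 1/t` turns the hypothesis into: `g(u) = u · Φ⁻¹(u)^(-q)` is almost decreasing
on `(0, ∞)`. Comparing `g` at `v` and at `L v` with `L = C · 4^q` (w.l.o.g. `C ≥ 1`) gives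
`Φ⁻¹(L v) ≥ 4 Φ⁻¹(v)`.
For `v = Φ(r)` we have `Φ⁻¹(v) ≥ r`, so `2r < Φ⁻¹(L Φ(r))` and therefore `Φ(2r) ≤ L Φ(r)`.
The same comparison, with `v → 0`, also rules out `Φ(r) = 0` for `r > 0`.
-/

open MeasureTheory ENNReal NNReal

noncomputable section

lemma ENNReal.rpow_neg_le_rpow_neg_iff {q : ℝ} (hq : 0 < q) {x y : ℝ≥0∞} :
    x ^ (-q) ≤ y ^ (-q) ↔ y ≤ x := by
  rw [ENNReal.rpow_neg, ENNReal.rpow_neg, ENNReal.inv_le_inv, ENNReal.rpow_le_rpow_iff hq]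

section yinv

variable {Φ : ℝ≥0∞ → ℝ≥0∞}

lemma yinv_le_of_lt {t w : ℝ≥0∞} (h : w < Φ t) : yinv Φ w ≤ t := sInf_le h

lemma le_of_lt_yinv {t w : ℝ≥0∞} (h : t < yinv Φ w) : Φ t ≤ w :=
  not_lt.1 fun hw => (yinv_le_of_lt hw).not_gt h

lemma le_yinv_of_le (hΦ : Monotone Φ) {r w : ℝ≥0∞} (h : Φ r ≤ w) : r ≤ yinv Φ w :=
  le_sInf fun _ ht => not_lt.1 fun htr => (hΦ htr.le |>.trans h).not_gt ht

end yinv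

def AlmostAntitoneOnPos (f : ℝ≥0∞ → ℝ≥0∞) (C : ℝ≥0) : Prop :=
  ∀ ⦃u v : ℝ≥0∞⦄, 0 < v → v ≤ u → u ≠ ⊤ → f u ≤ C * f v

lemma AlmostAntitoneOnPos.mono_const {f : ℝ≥0∞ → ℝ≥0∞} {C C' : ℝ≥0}
    (hf : AlmostAntitoneOnPos f C) (hCC' : C ≤ C') : AlmostAntitoneOnPos f C' :=
  fun _ _ hv hvu hu => (hf hv hvu hu).trans (mul_le_mul_left (by exact_mod_cast hCC') _)

lemma almostAntitoneOnPos_of_inv {f : ℝ≥0∞ → ℝ≥0∞} {C : ℝ≥0}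
    (h : ∀ t s : ℝ≥0∞, 0 < t → t ≤ s → s ≠ ⊤ → f t⁻¹ ≤ C * f s⁻¹) :
    AlmostAntitoneOnPos f C := by
  intro u v hv hvu hu
  simpa using h u⁻¹ v⁻¹ (ENNReal.inv_pos.2 hu) (ENNReal.inv_le_inv.2 hvu) (by simpa using hv.ne')

section AlmostAntitone

variable {Φ : ℝ≥0∞ → ℝ≥0∞} {q : ℝ} {C : ℝ≥0}

lemma pos_of_almostAntitoneOnPos (hmono : Monotone Φ) (hΦ : ∃ t, t ≠ ⊤ ∧ 0 < Φ t) (hq : 0 < q)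
    (H : AlmostAntitoneOnPos (fun u => u * yinv Φ u ^ (-q)) C) {r : ℝ≥0∞} (hr : 0 < r) :
    0 < Φ r := by
  by_contra! hr0
  have hyinv : ∀ v, r ≤ yinv Φ v := fun v => le_yinv_of_le hmono (hr0.trans bot_le)
  obtain ⟨t₀, ht₀, hΦt₀⟩ := hΦ
  obtain ⟨u₀, hu₀, hu₀t₀⟩ := ENNReal.lt_iff_exists_nnreal_btwn.1 hΦt₀
  set A := (u₀ : ℝ≥0∞) * t₀ ^ (-q)
  have hA : A ≠ 0 := mul_ne_zero hu₀.ne' <| by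
    simpa [ENNReal.rpow_neg] using ENNReal.rpow_ne_top_of_nonneg hq.le ht₀
  have hB : (C : ℝ≥0∞) * r ^ (-q) ≠ ⊤ := mul_ne_top coe_ne_top <| by
    simpa [ENNReal.rpow_neg] using (ENNReal.rpow_pos_of_nonneg hr hq.le).ne'
  obtain ⟨ε, hε, hεA⟩ := ENNReal.exists_pos_mul_lt hB hA
  set v := min (u₀ : ℝ≥0∞) ε
  have hv : 0 < v := lt_min hu₀ hε
  refine (lt_irrefl A) (calc
    A ≤ u₀ * yinv Φ u₀ ^ (-q) :=
      mul_le_mul_right ((ENNReal.rpow_neg_le_rpow_neg_iff hq).2 (yinv_le_of_lt hu₀t₀)) _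
    _ ≤ C * (v * yinv Φ v ^ (-q)) := H hv (min_le_left _ _) coe_ne_top
    _ ≤ C * (v * r ^ (-q)) :=
      mul_le_mul_right (mul_le_mul_right ((ENNReal.rpow_neg_le_rpow_neg_iff hq).2 (hyinv v)) _) _
    _ = v * (C * r ^ (-q)) := by ring
    _ ≤ ε * (C * r ^ (-q)) := mul_le_mul_left (min_le_right _ _) _
    _ < A := hεA)

lemma mul_yinv_le_yinv (hq : 0 < q) (H : AlmostAntitoneOnPos (fun u => u * yinv Φ u ^ (-q)) C)
    {c : ℝ≥0} (hc : c ≠ 0) (hL : 1 ≤ C * c ^ q) {v : ℝ≥0∞} (hv : 0 < v) (hv_top : v ≠ ⊤) :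
    c * yinv Φ v ≤ yinv Φ ((C * c ^ q : ℝ≥0) * v) := by
  set L : ℝ≥0 := C * c ^ q
  rcases eq_or_ne (yinv Φ v) 0 with hb | hb
  · simp [hb]
  have hLv0 : (L : ℝ≥0∞) * v ≠ 0 := mul_ne_zero (by exact_mod_cast (one_pos.trans_le hL).ne') hv.ne'
  have hLv_top : (L : ℝ≥0∞) * v ≠ ⊤ := mul_ne_top coe_ne_top hv_top
  have hcq : (c : ℝ≥0∞) ^ q * (c : ℝ≥0∞) ^ (-q) = 1 := by
    rw [ENNReal.rpow_neg, ENNReal.mul_inv_cancel]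
    · exact (ENNReal.rpow_pos (by simpa [pos_iff_ne_zero] using hc) coe_ne_top).ne'
    · exact ENNReal.rpow_ne_top_of_nonneg hq.le coe_ne_top
  have hcompare := H hv (le_mul_of_one_le_left' (by exact_mod_cast hL)) hLv_top
  -- `C = L c^(-q)`, so the factor `c^(-q)` can be absorbed into the power of `Φ⁻¹(v)`
  have hrhs : (C : ℝ≥0∞) * (v * yinv Φ v ^ (-q)) = L * v * (c * yinv Φ v) ^ (-q) := by
    rw [ENNReal.mul_rpow_of_ne_zero (by exact_mod_cast hc) hb, ← mul_one (C : ℝ≥0∞), ← hcq]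
    simp only [L, ENNReal.coe_mul, ENNReal.coe_rpow_of_ne_zero hc]
    ring
  rw [hrhs, ENNReal.mul_le_mul_iff_right hLv0 hLv_top] at hcompare
  exact (ENNReal.rpow_neg_le_rpow_neg_iff hq).1 hcompare

end AlmostAntitone

theorem stmt5_general (Φ : ℝ≥0∞ → ℝ≥0∞) (hΦ : YoungFunction Φ) (q : ℝ) (C : ℝ≥0)
    (hq : 0 < q)
    (h : ∀ t s : ℝ≥0∞, 0 < t → t ≤ s → s ≠ ⊤ →
      t⁻¹ * (yinv Φ t⁻¹) ^ (-q) ≤ (C : ℝ≥0∞) * (s⁻¹ * (yinv Φ s⁻¹) ^ (-q))) :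
    ∃ k : ℝ≥0, 1 < k ∧ ∀ r : ℝ≥0∞, 0 < r → Φ (2 * r) ≤ (k : ℝ≥0∞) * Φ r := by
  have H : AlmostAntitoneOnPos (fun u => u * yinv Φ u ^ (-q)) (max C 1) :=
    (almostAntitoneOnPos_of_inv h).mono_const le_sup_left
  set L : ℝ≥0 := max C 1 * 4 ^ q
  have hL : 1 < L := one_lt_mul_of_le_of_lt le_sup_right (NNReal.one_lt_rpow (by norm_num) hq)
  have hL0 : (L : ℝ≥0∞) ≠ 0 := by exact_mod_cast (one_pos.trans hL).ne'
  refine ⟨L, hL, fun r hr => ?_⟩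
  rcases eq_or_ne r ⊤ with rfl | hr_top
  · simp [hΦ.map_top, mul_top hL0]
  rcases eq_or_ne (Φ r) ⊤ with hΦr_top | hΦr_top
  · simp [hΦr_top, mul_top hL0]
  have hΦr := pos_of_almostAntitoneOnPos hΦ.mono hΦ.exists_pos hq H hr
  refine le_of_lt_yinv (calc
    2 * r < 4 * r := ENNReal.mul_lt_mul_left hr.ne' hr_top (by norm_num)
    _ ≤ (4 : ℝ≥0) * yinv Φ (Φ r) := by
      simpa using mul_le_mul_right (le_yinv_of_le hΦ.mono le_rfl) 4
    _ ≤ yinv Φ (L * Φ r) := mul_yinv_le_yinv hq H (by norm_num) hL.le hΦr hΦr_top)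

/-- the almost-decreasing estimate implies Delta2. -/
theorem stmt5 (Φ : ℝ≥0∞ → ℝ≥0∞) (hΦ : YoungFunction Φ) (q : ℝ) (C : ℝ≥0)
    (hq : 0 < q) (hC : 1 ≤ C)
    (h : ∀ t s : ℝ≥0∞, 0 < t → t ≤ s → s ≠ ⊤ →
      t⁻¹ * (yinv Φ t⁻¹) ^ (-q) ≤ (C : ℝ≥0∞) * (s⁻¹ * (yinv Φ s⁻¹) ^ (-q))) :
    ∃ k : ℝ≥0, 1 < k ∧ ∀ r : ℝ≥0∞, 0 < r → Φ (2 * r) ≤ (k : ℝ≥0∞) * Φ r :=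
  stmt5_general Φ hΦ q C hq h
end
end

section
/- Let Φ be a Young function. For every measurable function f on ℝⁿ, the weak Orlicz quasi-norm ‖f‖_{wL^Φ} = inf{λ>0 : sup_{t>0} Φ(t)·m(f/λ,t) ≤ 1} equals the quasi-norm ‖f‖_{L^{Φ,∞}} = sup_{t>0} Φ⁻¹(1/m(f,t))^{-1}·t, i.e. ‖f‖_{wL^Φ} = sup_{t>0} t·Φ⁻¹(1/m(f,t))^{-1} (with the conventions 1/0 = ∞, Φ⁻¹(∞) = ∞). -/
open MeasureTheory ENNReal NNReal

noncomputable section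

/-!
`Φ(t) m(λt) ≤ 1` means `Φ(t) ≤ 1/m(λt)`, and by the definition of the generalized inverse
`Φ(τ) ≤ u` holds for every `τ < s` exactly when `s ≤ Φ⁻¹(u)`. Writing `s = λt`, every `λ`
strictly above `sup_s s / Φ⁻¹(1/m(s))` is admissible for the weak Orlicz norm. Conversely, if `λ`
is admissible and `τ < s/λ`, then `m(s) ≤ m(λτ)` gives `Φ(τ) ≤ 1/m(s)`, so `s/λ ≤ Φ⁻¹(1/m(s))`.
-/

theorem le_yinv_iff {Φ : ℝ≥0∞ → ℝ≥0∞} {u s : ℝ≥0∞} : s ≤ yinv Φ u ↔ ∀ τ < s, Φ τ ≤ u := by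
  simp only [yinv, le_sInf_iff, Set.mem_ofPred_eq]
  exact forall_congr' fun τ =>
    ⟨fun h hτ => not_lt.1 fun h' => (h h').not_gt hτ,
      fun h h' => not_lt.1 fun hτ => (h hτ).not_gt h'⟩

/-- Here and in `orliczLorentzNorm`, `m` stands for the distribution function
`s ↦ |{x : |f x| > s}|` of the function being measured. -/
def weakOrliczNorm (Φ m : ℝ≥0∞ → ℝ≥0∞) : ℝ≥0∞ :=
  sInf {l | 0 < l ∧ ∀ t : ℝ≥0, 0 < t → Φ t * m (l * t) ≤ 1}

def orliczLorentzNorm (Φ m : ℝ≥0∞ → ℝ≥0∞) : ℝ≥0∞ :=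
  ⨆ (t : ℝ≥0) (_ : 0 < t), t * (yinv Φ (m t)⁻¹)⁻¹

theorem mul_le_one_of_orliczLorentzNorm_lt {Φ m : ℝ≥0∞ → ℝ≥0∞} {l t : ℝ≥0}
    (hl : orliczLorentzNorm Φ m < l) (ht : 0 < t) : Φ t * m ↑(l * t) ≤ 1 := by
  set y := yinv Φ (m ↑(l * t))⁻¹
  have hty : (t : ℝ≥0∞) < y := by
    by_contra! hyt
    have hterm : ((l * t : ℝ≥0) : ℝ≥0∞) * y⁻¹ ≤ orliczLorentzNorm Φ m :=
      le_iSup₂ (f := fun (s : ℝ≥0) (_ : 0 < s) => (s : ℝ≥0∞) * (yinv Φ (m s)⁻¹)⁻¹) (l * t)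
        (mul_pos (coe_pos.1 (hl.trans_le' zero_le)) ht)
    refine (hl.trans_le' hterm).not_ge ?_
    calc (l : ℝ≥0∞) = l * t * (t : ℝ≥0∞)⁻¹ := by
          rw [mul_assoc, ENNReal.mul_inv_cancel (coe_ne_zero.2 ht.ne') coe_ne_top, mul_one]
      _ ≤ l * t * y⁻¹ := by gcongr
      _ = ((l * t : ℝ≥0) : ℝ≥0∞) * y⁻¹ := by rw [coe_mul]
  exact le_inv_iff_mul_le.1 (le_yinv_iff.1 le_rfl t hty)

theorem weakOrliczNorm_le_orliczLorentzNorm (Φ m : ℝ≥0∞ → ℝ≥0∞) :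
    weakOrliczNorm Φ m ≤ orliczLorentzNorm Φ m := by
  refine ENNReal.le_of_forall_pos_le_add fun ε hε hS => ?_
  set l : ℝ≥0 := (orliczLorentzNorm Φ m).toNNReal + ε
  have hl : (l : ℝ≥0∞) = orliczLorentzNorm Φ m + ε := by
    simp only [l, coe_add, coe_toNNReal hS.ne]
  have hSl : orliczLorentzNorm Φ m < l := by
    rw [hl]; exact ENNReal.lt_add_right hS.ne (coe_ne_zero.2 hε.ne')
  refine hl ▸ sInf_le ⟨hSl.trans_le' zero_le, fun t ht => ?_⟩
  exact_mod_cast mul_le_one_of_orliczLorentzNorm_lt hSl ht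

theorem orliczLorentzNorm_le_weakOrliczNorm {Φ m : ℝ≥0∞ → ℝ≥0∞} (hΦ : Φ 0 = 0)
    (hm : Antitone m) : orliczLorentzNorm Φ m ≤ weakOrliczNorm Φ m := by
  refine le_sInf fun l ⟨hl0, hl⟩ => iSup₂_le fun s _ => ?_
  rcases eq_or_ne l ⊤ with rfl | hltop
  · exact le_top
  lift l to ℝ≥0 using hltop
  have hl0' : (l : ℝ≥0∞) ≠ 0 := hl0.ne'
  have hsy : (s : ℝ≥0∞) / l ≤ yinv Φ (m s)⁻¹ := by
    refine le_yinv_iff.2 fun τ hτ => ?_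
    rcases eq_or_ne τ 0 with rfl | hτ0
    · simp [hΦ]
    lift τ to ℝ≥0 using ne_top_of_lt hτ
    have hlτ : (l * τ : ℝ≥0∞) ≤ s := mul_le_of_le_div' hτ.le
    calc Φ τ ≤ (m (l * τ))⁻¹ := le_inv_iff_mul_le.2 (hl τ (pos_iff_ne_zero.2 (coe_ne_zero.1 hτ0)))
      _ ≤ (m s)⁻¹ := ENNReal.inv_le_inv.2 (hm hlτ)
  rw [← div_eq_mul_inv]
  refine div_le_of_le_mul ?_
  rwa [mul_comm, ← ENNReal.div_le_iff_le_mul (.inl hl0') (.inl coe_ne_top)]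

theorem weakOrliczNorm_eq_orliczLorentzNorm {Φ m : ℝ≥0∞ → ℝ≥0∞} (hΦ : Φ 0 = 0)
    (hm : Antitone m) : weakOrliczNorm Φ m = orliczLorentzNorm Φ m :=
  (weakOrliczNorm_le_orliczLorentzNorm Φ m).antisymm (orliczLorentzNorm_le_weakOrliczNorm hΦ hm)

theorem stmt7_general (Φ : ℝ≥0∞ → ℝ≥0∞) (hΦ : YoungFunction Φ) (n : ℕ)
    (f : EuclideanSpace ℝ (Fin n) → ℝ) :
    sInf {l : ℝ≥0∞ | 0 < l ∧ ∀ t : ℝ≥0, 0 < t →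
        Φ (t : ℝ≥0∞) * volume {x | l * (t : ℝ≥0∞) < ENNReal.ofReal |f x|} ≤ 1}
      = ⨆ (t : ℝ≥0) (_ : 0 < t),
          (t : ℝ≥0∞) *
            (yinv Φ (volume {x | (t : ℝ≥0∞) < ENNReal.ofReal |f x|})⁻¹)⁻¹ :=
  weakOrliczNorm_eq_orliczLorentzNorm (m := fun s => volume {x | s < ENNReal.ofReal |f x|})
    hΦ.map_zero fun _ _ hst => measure_mono fun _ hx => hst.trans_lt hx

/-- the weak Orlicz quasi-norm coincides with the Orlicz-Lorentz
`L^{Φ,∞}` quasi-norm `sup_{t>0} t Φ⁻¹(1/m(f,t))⁻¹`. -/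
theorem stmt7 (Φ : ℝ≥0∞ → ℝ≥0∞) (hΦ : YoungFunction Φ) (n : ℕ)
    (f : EuclideanSpace ℝ (Fin n) → ℝ) (hf : Measurable f) :
    sInf {l : ℝ≥0∞ | 0 < l ∧ ∀ t : ℝ≥0, 0 < t →
        Φ (t : ℝ≥0∞) * volume {x | l * (t : ℝ≥0∞) < ENNReal.ofReal |f x|} ≤ 1}
      = ⨆ (t : ℝ≥0) (_ : 0 < t),
          (t : ℝ≥0∞) *
            (yinv Φ (volume {x | (t : ℝ≥0∞) < ENNReal.ofReal |f x|})⁻¹)⁻¹ :=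
  stmt7_general Φ hΦ n f
end
end

section
/- Let Φ be a Young function, 0 < q < ∞, and E ⊂ ℝⁿ a measurable set of finite positive measure. Then ‖χ_E‖_{L^{Φ,q}} ≥ q^{-1/q}·Φ⁻¹(1/|E|)^{-1}, where ‖χ_E‖_{L^{Φ,q}} = (∫₀^{|E|} Φ⁻¹(1/t)^{-q} dt/t)^{1/q}. -/
/-!
Convexity and `Φ(0) = 0` give `l Φ(s) ≤ Φ(l s)` for `l ≥ 1`, hence `Φ⁻¹(l v) ≤ l Φ⁻¹(v)`, i.e.
`t ↦ t⁻¹ Φ⁻¹(1/t)⁻¹` is decreasing. For `t < |E|` this bounds the integrand from below by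
`(|E| Φ⁻¹(1/|E|))^{-q} t^{q-1}`, whose integral over `(0, |E|)` is `Φ⁻¹(1/|E|)^{-q} / q`.
-/

open MeasureTheory ENNReal NNReal

noncomputable section

lemma setLIntegral_Ioo_rpow_mul_inv {T q : ℝ} (hT : 0 ≤ T) (hq : 0 < q) :
    ∫⁻ t in Set.Ioo 0 T, ENNReal.ofReal t ^ q * (ENNReal.ofReal t)⁻¹ =
      ENNReal.ofReal T ^ q / ENNReal.ofReal q := by
  have hpow : ∀ t ∈ Set.Ioo (0 : ℝ) T,
      ENNReal.ofReal t ^ q * (ENNReal.ofReal t)⁻¹ = ENNReal.ofReal (t ^ (q - 1)) := by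
    intro t ht
    rw [← ofReal_rpow_of_pos ht.1, sub_eq_add_neg, rpow_add _ _ (ofReal_pos.2 ht.1).ne'
      ofReal_ne_top, ENNReal.rpow_neg_one]
  have hint : IntegrableOn (fun t : ℝ => t ^ (q - 1)) (Set.Ioo 0 T) := by
    rw [← intervalIntegrable_iff_integrableOn_Ioo_of_le hT]
    exact intervalIntegral.intervalIntegrable_rpow' (by linarith)
  have hnn : 0 ≤ᵐ[volume.restrict (Set.Ioo 0 T)] fun t : ℝ => t ^ (q - 1) :=
    (ae_restrict_iff' measurableSet_Ioo).2 (.of_forall fun t ht => Real.rpow_nonneg ht.1.le _)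
  rw [setLIntegral_congr_fun measurableSet_Ioo hpow,
    ← ofReal_integral_eq_lintegral_ofReal hint hnn, ← integral_Ioc_eq_integral_Ioo,
    ← intervalIntegral.integral_of_le hT, integral_rpow (.inl (by linarith)),
    sub_add_cancel, Real.zero_rpow hq.ne', sub_zero, ENNReal.ofReal_div_of_pos hq,
    ofReal_rpow_of_nonneg hT hq.le]

namespace YoungFunction

variable {Φ : ℝ≥0∞ → ℝ≥0∞}

lemma mul_apply_le_apply_mul (hΦ : YoungFunction Φ) {l : ℝ≥0} (hl : 1 ≤ l) (s : ℝ≥0∞) :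
    l * Φ s ≤ Φ (l * s) := by
  have hl0 : l ≠ 0 := (zero_lt_one.trans_le hl).ne'
  have hconv := hΦ.convex l⁻¹ (1 - l⁻¹) (l * s) 0 (add_tsub_cancel_of_le (inv_le_one_of_one_le₀ hl))
  rw [mul_zero, add_zero, hΦ.map_zero, mul_zero, add_zero, ← mul_assoc, ← coe_mul,
    inv_mul_cancel₀ hl0, ENNReal.coe_one, one_mul] at hconv
  calc (l : ℝ≥0∞) * Φ s ≤ l * (l⁻¹ * Φ (l * s) : ℝ≥0∞) := by gcongr
    _ = Φ (l * s) := by rw [← mul_assoc, ← coe_mul, mul_inv_cancel₀ hl0, ENNReal.coe_one, one_mul]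

lemma yinv_pos (hΦ : YoungFunction Φ) {v : ℝ≥0∞} (hv : 0 < v) : 0 < yinv Φ v := by
  obtain ⟨U, hU, h0U, hsub⟩ := mem_nhdsWithin.1 (hΦ.tendsto_zero (Iio_mem_nhds hv))
  obtain ⟨ε, hε, hball⟩ := nhds_zero_basis.mem_iff.1 (hU.mem_nhds h0U)
  refine hε.trans_le (le_sInf fun s (hs : v < Φ s) => ?_)
  by_contra! hsε
  have hs0 : s ≠ 0 := by rintro rfl; simp [hΦ.map_zero] at hs
  exact (hsub ⟨hball hsε, pos_iff_ne_zero.2 hs0⟩ : Φ s < v).not_gt hs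

lemma yinv_mul_le (hΦ : YoungFunction Φ) {l : ℝ≥0} (hl : 1 ≤ l) (v : ℝ≥0∞) :
    yinv Φ (l * v) ≤ l * yinv Φ v := by
  have hl0 : (l : ℝ≥0∞) ≠ 0 := by exact_mod_cast (zero_lt_one.trans_le hl).ne'
  suffices yinv Φ (l * v) / l ≤ yinv Φ v by
    rwa [ENNReal.div_le_iff hl0 coe_ne_top, mul_comm (yinv Φ v)] at this
  refine le_sInf fun s (hs : v < Φ s) => ENNReal.div_le_of_le_mul (mul_comm s l ▸ ?_)
  exact sInf_le ((ENNReal.mul_lt_mul_right hl0 coe_ne_top hs).trans_le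
    (hΦ.mul_apply_le_apply_mul hl s))

lemma yinv_le_div_mul (hΦ : YoungFunction Φ) {u v : ℝ≥0∞} (hv : 0 < v) (hvu : v ≤ u)
    (hu : u ≠ ⊤) : yinv Φ u ≤ u / v * yinv Φ v := by
  have hv' : v ≠ ⊤ := ne_top_of_le_ne_top hu hvu
  have hl : ((u / v).toNNReal : ℝ≥0∞) = u / v := coe_toNNReal (div_ne_top hu hv.ne')
  have hl1 : 1 ≤ (u / v).toNNReal := by
    rw [← one_le_coe_iff, hl, ENNReal.le_div_iff_mul_le (.inl hv.ne') (.inl hv'), one_mul]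
    exact hvu
  simpa only [hl, ENNReal.div_mul_cancel hv.ne' hv'] using hΦ.yinv_mul_le hl1 v

lemma rpow_neg_mul_rpow_le_yinv_rpow_neg (hΦ : YoungFunction Φ) {q : ℝ} (hq : 0 ≤ q)
    {t V : ℝ≥0∞} (ht : 0 < t) (htV : t ≤ V) (hV : V ≠ ⊤) (hc : yinv Φ V⁻¹ ≠ ⊤) :
    (V * yinv Φ V⁻¹) ^ (-q) * t ^ q ≤ yinv Φ t⁻¹ ^ (-q) := by
  have hle : yinv Φ t⁻¹ ≤ t⁻¹ * (V * yinv Φ V⁻¹) := by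
    have := hΦ.yinv_le_div_mul (ENNReal.inv_pos.2 hV) (ENNReal.inv_le_inv.2 htV)
      (ENNReal.inv_ne_top.2 ht.ne')
    rwa [ENNReal.div_eq_inv_mul, inv_inv, mul_comm V, mul_assoc] at this
  calc (V * yinv Φ V⁻¹) ^ (-q) * t ^ q = (t⁻¹ * (V * yinv Φ V⁻¹)) ^ (-q) := by
        rw [mul_rpow_of_ne_top (ENNReal.inv_ne_top.2 ht.ne') (mul_ne_top hV hc),
          ENNReal.inv_rpow, ← ENNReal.rpow_neg, neg_neg, mul_comm]
    _ ≤ yinv Φ t⁻¹ ^ (-q) := by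
        rw [ENNReal.rpow_neg, ENNReal.rpow_neg]
        exact ENNReal.inv_le_inv.2 (rpow_le_rpow hle hq)

lemma yinv_rpow_neg_div_le_setLIntegral (hΦ : YoungFunction Φ) {q : ℝ} (hq : 0 < q)
    {V : ℝ≥0∞} (hV0 : 0 < V) (hV : V ≠ ⊤) (hc : yinv Φ V⁻¹ ≠ ⊤) :
    yinv Φ V⁻¹ ^ (-q) / ENNReal.ofReal q ≤
      ∫⁻ t in Set.Ioo 0 V.toReal, yinv Φ (ENNReal.ofReal t)⁻¹ ^ (-q) * (ENNReal.ofReal t)⁻¹ := by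
  set c := yinv Φ V⁻¹
  have hscale : (V * c) ^ (-q) * V ^ q = c ^ (-q) := by
    rw [mul_rpow_of_ne_top hV hc, mul_right_comm, ENNReal.rpow_neg V, ENNReal.inv_mul_cancel
      (rpow_pos hV0 hV).ne' (rpow_ne_top_of_nonneg hq.le hV), one_mul]
  have hV' : ENNReal.ofReal V.toReal = V := ofReal_toReal hV
  calc c ^ (-q) / ENNReal.ofReal q = (V * c) ^ (-q) * (V ^ q / ENNReal.ofReal q) := by
        rw [← mul_div_assoc, hscale]
    _ = ∫⁻ t in Set.Ioo 0 V.toReal,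
          (V * c) ^ (-q) * (ENNReal.ofReal t ^ q * (ENNReal.ofReal t)⁻¹) := by
        rw [lintegral_const_mul _ (by fun_prop), setLIntegral_Ioo_rpow_mul_inv toReal_nonneg hq,
          hV']
    _ ≤ _ := setLIntegral_mono' measurableSet_Ioo fun t ht => by
        rw [← mul_assoc]
        gcongr
        exact hΦ.rpow_neg_mul_rpow_le_yinv_rpow_neg hq.le (ofReal_pos.2 ht.1)
          (hV' ▸ ofReal_le_ofReal ht.2.le) hV hc

end YoungFunction

theorem stmt8_general (Φ : ℝ≥0∞ → ℝ≥0∞) (hΦ : YoungFunction Φ) (n : ℕ) (q : ℝ) (hq : 0 < q)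
    (E : Set (EuclideanSpace ℝ (Fin n)))
    (hE0 : 0 < volume E) (hEfin : volume E ≠ ⊤) :
    ENNReal.ofReal (q ^ (-(1 / q))) * (yinv Φ (volume E)⁻¹)⁻¹ ≤
      (∫⁻ t in Set.Ioo (0 : ℝ) (volume E).toReal,
        (yinv Φ (ENNReal.ofReal t)⁻¹) ^ (-q) * (ENNReal.ofReal t)⁻¹) ^ (1 / q) := by
  set c := yinv Φ (volume E)⁻¹
  rcases eq_or_ne c ⊤ with hc | hc
  · simp [hc]
  have hc0 : 0 < c := hΦ.yinv_pos (ENNReal.inv_pos.2 hEfin)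
  calc ENNReal.ofReal (q ^ (-(1 / q))) * c⁻¹ = (c ^ (-q) / ENNReal.ofReal q) ^ (1 / q) := by
        rw [div_eq_mul_inv (c ^ (-q)), mul_rpow_of_ne_top (rpow_ne_top_of_nonneg' hc0 hc)
            (ENNReal.inv_ne_top.2 (ofReal_pos.2 hq).ne'),
          ← ENNReal.rpow_mul, ENNReal.inv_rpow, ofReal_rpow_of_pos hq,
          show -q * (1 / q) = -1 by field_simp, ENNReal.rpow_neg_one, Real.rpow_neg hq.le,
          ofReal_inv_of_pos (by positivity), mul_comm]
    _ ≤ _ := rpow_le_rpow (hΦ.yinv_rpow_neg_div_le_setLIntegral hq hE0 hEfin hc) (by positivity)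

/-- lower bound for the Orlicz-Lorentz quasi-norm of an indicator. -/
theorem stmt8 (Φ : ℝ≥0∞ → ℝ≥0∞) (hΦ : YoungFunction Φ) (n : ℕ) (q : ℝ) (hq : 0 < q)
    (E : Set (EuclideanSpace ℝ (Fin n))) (hE : MeasurableSet E)
    (hE0 : 0 < volume E) (hEfin : volume E ≠ ⊤) :
    ENNReal.ofReal (q ^ (-(1 / q))) * (yinv Φ (volume E)⁻¹)⁻¹ ≤
      (∫⁻ t in Set.Ioo (0 : ℝ) (volume E).toReal,
        (yinv Φ (ENNReal.ofReal t)⁻¹) ^ (-q) * (ENNReal.ofReal t)⁻¹) ^ (1 / q) :=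
  stmt8_general Φ hΦ n q hq E hE0 hEfin
end
end

section
/- Let Φ be a Young function in Δ₂ and 0 < q < ∞. Then for every measurable set E ⊂ ℝⁿ of finite positive measure, ‖χ_E‖_{L^{Φ,q}} ≤ C^{1/q}·Φ⁻¹(1/|E|)^{-1}, where C is the constant from the Δ₂ estimate (1/t)Φ⁻¹(1/t)^{-q} ≤ C(1/s)Φ⁻¹(1/s)^{-q} for t ≤ s. Hence ‖χ_E‖_{L^{Φ,q}} ∼ Φ⁻¹(1/|E|)^{-1}. -/
open MeasureTheory ENNReal NNReal

noncomputable section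

/-- under Delta2, the upper bound for the Orlicz-Lorentz quasi-norm
of an indicator, with the constant from the almost-decreasing estimate. -/
theorem stmt9 (Φ : ℝ≥0∞ → ℝ≥0∞) (hΦ : YoungFunction Φ)
    (hΔ : ∃ k : ℝ≥0, 1 < k ∧ ∀ r : ℝ≥0∞, 0 < r → Φ (2 * r) ≤ (k : ℝ≥0∞) * Φ r)
    (n : ℕ) (q : ℝ) (hq : 0 < q) (C : ℝ≥0) (hC : 1 ≤ C)
    (hest : ∀ t s : ℝ≥0∞, 0 < t → t ≤ s → s ≠ ⊤ →
      t⁻¹ * (yinv Φ t⁻¹) ^ (-q) ≤ (C : ℝ≥0∞) * (s⁻¹ * (yinv Φ s⁻¹) ^ (-q)))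
    (E : Set (EuclideanSpace ℝ (Fin n))) (hE : MeasurableSet E)
    (hE0 : 0 < volume E) (hEfin : volume E ≠ ⊤) :
    (∫⁻ t in Set.Ioo (0 : ℝ) (volume E).toReal,
        (yinv Φ (ENNReal.ofReal t)⁻¹) ^ (-q) * (ENNReal.ofReal t)⁻¹) ^ (1 / q) ≤
      (C : ℝ≥0∞) ^ (1 / q) * (yinv Φ (volume E)⁻¹)⁻¹ := by
  set μE := volume E with hμE
  set K : ℝ≥0∞ := (C : ℝ≥0∞) * (μE⁻¹ * (yinv Φ μE⁻¹) ^ (-q)) with hK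
  have hint : (∫⁻ t in Set.Ioo (0 : ℝ) μE.toReal,
      (yinv Φ (ENNReal.ofReal t)⁻¹) ^ (-q) * (ENNReal.ofReal t)⁻¹) ≤ K * μE := by
    calc (∫⁻ t in Set.Ioo (0 : ℝ) μE.toReal,
        (yinv Φ (ENNReal.ofReal t)⁻¹) ^ (-q) * (ENNReal.ofReal t)⁻¹)
        ≤ ∫⁻ _ in Set.Ioo (0 : ℝ) μE.toReal, K := by
          apply setLIntegral_mono measurable_const
          intro t ht
          rw [mul_comm]
          have h1 : 0 < ENNReal.ofReal t := ENNReal.ofReal_pos.2 ht.1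
          have h2 : ENNReal.ofReal t ≤ μE := ENNReal.ofReal_le_of_le_toReal ht.2.le
          exact hest _ _ h1 h2 hEfin
      _ = K * μE := by
          rw [setLIntegral_const, Real.volume_Ioo, sub_zero,
            ENNReal.ofReal_toReal hEfin]
  have hKmul : K * μE = (C : ℝ≥0∞) * (yinv Φ μE⁻¹) ^ (-q) := by
    rw [hK, mul_assoc, mul_comm (μE⁻¹) _, mul_assoc,
      ENNReal.inv_mul_cancel hE0.ne' hEfin, mul_one]
  have hmono := ENNReal.rpow_le_rpow (hint.trans_eq hKmul) (by positivity : (0:ℝ) ≤ 1/q)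
  refine hmono.trans_eq ?_
  rw [ENNReal.mul_rpow_of_nonneg _ _ (by positivity : (0:ℝ) ≤ 1/q),
    ← ENNReal.rpow_mul]
  congr 1
  rw [show (-q) * (1/q) = -1 by field_simp, ENNReal.rpow_neg_one]
end
end

section
/- For Φ(t) = eᵗ − 1, the generalized inverse is Φ⁻¹(u) = log(1+u), and for any measurable set E with 0 < |E| ≤ 1/2, ∫₀^{|E|} (log(1+1/u))^{-1} du/u = ∞. Consequently L^{Φ,1}(ℝⁿ) = {0} for this Φ. -/
open MeasureTheory ENNReal NNReal

noncomputable section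

/-- Decreasing rearrangement `f*(t) = inf{α : m(f,α) ≤ t}` (with `inf ∅ = ∞`). -/
def rearr {n : ℕ} (f : EuclideanSpace ℝ (Fin n) → ℝ) (t : ℝ) : ℝ≥0∞ :=
  sInf {l : ℝ≥0∞ | volume {x | l < ENNReal.ofReal |f x|} ≤ ENNReal.ofReal t}

/-- The Young function `Φ(t) = eᵗ - 1` (with `Φ(∞) = ∞`). -/
def expYoung : ℝ≥0∞ → ℝ≥0∞ :=
  fun u => if u = ⊤ then ⊤ else ENNReal.ofReal (Real.exp u.toReal - 1)

/-! Since `Φ⁻¹(u) = log (1 + u)`, the weight `(Φ⁻¹(1/t))⁻¹ t⁻¹` behaves like `1 / (t log (1/t))`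
as `t → 0⁺` (because `log (1 + 1/t) ≤ 2 log (1/t)` for `t ≤ 1/2`), and this is not integrable at
`0`. If `f` is not a.e. zero, then `f* ≥ l > 0` on some interval `(0, c)`, so the integral defining
the `L^{Φ,1}` quasinorm of `f` diverges. -/

open Filter Topology Set

lemma yinv_expYoung (u : ℝ≥0∞) (hu : u ≠ ⊤) :
    yinv expYoung u = ENNReal.ofReal (Real.log (1 + u.toReal)) := by
  have hpos : 0 < 1 + u.toReal := by positivity
  have hlog : 0 ≤ Real.log (1 + u.toReal) := Real.log_nonneg (by simp)
  have hset : {t | u < expYoung t} = Ioi (ENNReal.ofReal (Real.log (1 + u.toReal))) := by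
    ext t
    rcases eq_or_ne t ⊤ with rfl | ht
    · simp [expYoung, lt_top_iff_ne_top, hu]
    · simp only [expYoung, ht, if_false, mem_ofPred_eq, mem_Ioi]
      rw [ENNReal.lt_ofReal_iff_toReal_lt hu, ENNReal.ofReal_lt_iff_lt_toReal hlog ht,
        Real.log_lt_iff_lt_exp hpos, lt_sub_iff_add_lt, add_comm]
  rw [yinv, hset, isGLB_Ioi.sInf_eq]

lemma yinv_expYoung_ofReal_inv {t : ℝ} (ht : 0 < t) :
    yinv expYoung (ENNReal.ofReal t)⁻¹ = ENNReal.ofReal (Real.log (1 + 1 / t)) := by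
  rw [yinv_expYoung _ (ENNReal.inv_ne_top.2 (ENNReal.ofReal_pos.2 ht).ne'), ENNReal.toReal_inv,
    ENNReal.toReal_ofReal ht.le, one_div]

lemma log_one_add_inv_le_two_mul_log_inv {u : ℝ} (hu0 : 0 < u) (hu : u ≤ 1 / 2) :
    Real.log (1 + u⁻¹) ≤ 2 * Real.log u⁻¹ := by
  have hsq : 1 + u⁻¹ ≤ u⁻¹ ^ 2 := by
    rw [inv_pow, ← sub_nonneg]
    have : (u ^ 2)⁻¹ - (1 + u⁻¹) = (1 - u - u ^ 2) / u ^ 2 := by field_simp; ring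
    rw [this]
    exact div_nonneg (by nlinarith) (by positivity)
  calc Real.log (1 + u⁻¹) ≤ Real.log (u⁻¹ ^ 2) := Real.log_le_log (by positivity) hsq
    _ = 2 * Real.log u⁻¹ := by rw [Real.log_pow]; norm_num

/-- The antiderivative `log (-log u)` of `1 / (u log u)` blows up as `u → 0⁺`. -/
lemma not_integrableOn_inv_mul_log_one_add_inv {s : Set ℝ} (hs : s ∈ 𝓝[>] (0 : ℝ)) :
    ¬ IntegrableOn (fun u : ℝ => (u * Real.log (1 + u⁻¹))⁻¹) s := by
  have hsmall : ∀ᶠ u in 𝓝[>] (0 : ℝ), u ∈ Ioo 0 (1 / 2) := Ioo_mem_nhdsGT (by norm_num)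
  have hderiv : ∀ᶠ u in 𝓝[>] (0 : ℝ),
      HasDerivAt (fun u => Real.log (-Real.log u)) (u⁻¹ / Real.log u) u := by
    filter_upwards [hsmall] with u ⟨hu0, hu⟩
    have hlog : Real.log u < 0 := Real.log_neg hu0 (by linarith)
    have h := (Real.hasDerivAt_log hu0.ne').neg (f := Real.log)
    simpa only [neg_div_neg_eq] using HasDerivAt.log (f := fun x => -Real.log x) h (by linarith)
  refine not_integrableOn_of_tendsto_norm_atTop_of_deriv_isBigO_filter (𝓝[>] 0) hs
    (hderiv.mono fun u hu => hu.differentiableAt) ?_ ?_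
  · exact tendsto_norm_atTop_atTop.comp
      (Real.tendsto_log_atTop.comp (tendsto_neg_atBot_atTop.comp Real.tendsto_log_nhdsGT_zero))
  · refine Asymptotics.IsBigO.of_bound 2 ?_
    filter_upwards [hsmall, hderiv] with u ⟨hu0, hu⟩ hu'
    have hlog : Real.log u < 0 := Real.log_neg hu0 (by linarith)
    have hlog1 : 0 < Real.log (1 + u⁻¹) := Real.log_pos (by simp [hu0])
    have hkey := log_one_add_inv_le_two_mul_log_inv hu0 hu.le
    have hpos : 0 < (u * Real.log (1 + u⁻¹))⁻¹ := by positivity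
    rw [hu'.deriv, Real.norm_eq_abs, Real.norm_of_nonneg hpos.le, abs_div, abs_inv,
      abs_of_pos hu0, abs_of_neg hlog, ← Real.log_inv]
    calc u⁻¹ / Real.log u⁻¹ = (u * Real.log u⁻¹)⁻¹ := by rw [mul_inv, div_eq_mul_inv]
      _ ≤ (u * (Real.log (1 + u⁻¹) / 2))⁻¹ := inv_anti₀ (by positivity) (by gcongr; linarith)
      _ = 2 * (u * Real.log (1 + u⁻¹))⁻¹ := by field_simp

lemma lintegral_inv_log_one_add_inv_mul_inv_eq_top {c : ℝ} (hc : 0 < c) :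
    ∫⁻ u in Ioo 0 c, (ENNReal.ofReal (Real.log (1 + 1 / u)))⁻¹ * (ENNReal.ofReal u)⁻¹ = ⊤ := by
  have hlog : ∀ u ∈ Ioo 0 c, 0 < Real.log (1 + u⁻¹) := fun u hu =>
    Real.log_pos (by simp [hu.1])
  have hnonneg : 0 ≤ᵐ[volume.restrict (Ioo 0 c)] fun u : ℝ => (u * Real.log (1 + u⁻¹))⁻¹ := by
    filter_upwards [ae_restrict_mem measurableSet_Ioo] with u hu
    have := hlog u hu
    have := hu.1
    positivity
  have hdiv : ∫⁻ u in Ioo 0 c, ENNReal.ofReal (u * Real.log (1 + u⁻¹))⁻¹ = ⊤ := by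
    by_contra h
    exact not_integrableOn_inv_mul_log_one_add_inv (Ioo_mem_nhdsGT hc)
      ((lintegral_ofReal_ne_top_iff_integrable (by fun_prop) hnonneg).1 h)
  rw [← hdiv]
  refine setLIntegral_congr_fun measurableSet_Ioo fun u hu => ?_
  rw [one_div, ← ENNReal.ofReal_inv_of_pos (hlog u hu), ← ENNReal.ofReal_inv_of_pos hu.1,
    ← ENNReal.ofReal_mul (inv_nonneg.2 (hlog u hu).le), mul_inv, mul_comm]

lemma exists_measure_lt_ne_zero_of_not_ae_eq_zero {α : Type*} [MeasurableSpace α]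
    {μ : Measure α} {g : α → ℝ≥0∞} (hg : ¬ g =ᵐ[μ] 0) : ∃ l > 0, μ {x | l < g x} ≠ 0 := by
  by_contra! h
  refine hg (ae_iff.2 (measure_mono_null (fun x (hx : g x ≠ 0) => ?_)
    (measure_iUnion_null fun n : ℕ => h _ (ENNReal.inv_pos.2 (natCast_ne_top n)))))
  exact mem_iUnion.2 (ENNReal.exists_inv_nat_lt hx)

lemma le_rearr_of_ofReal_lt_volume {n : ℕ} {f : EuclideanSpace ℝ (Fin n) → ℝ} {l : ℝ≥0∞}
    {t : ℝ} (ht : ENNReal.ofReal t < volume {x | l < ENNReal.ofReal |f x|}) : l ≤ rearr f t :=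
  le_sInf fun _ hb => not_lt.1 fun hbl =>
    (ht.trans_le (measure_mono fun _ hx => hbl.trans hx)).not_ge hb

lemma ae_eq_zero_of_lintegral_yinv_expYoung_rearr_ne_top {n : ℕ}
    {f : EuclideanSpace ℝ (Fin n) → ℝ}
    (hf : ∫⁻ t in Ioi (0 : ℝ),
      (yinv expYoung (ENNReal.ofReal t)⁻¹)⁻¹ * rearr f t * (ENNReal.ofReal t)⁻¹ ≠ ⊤) :
    f =ᵐ[volume] 0 := by
  by_contra hne
  obtain ⟨l, hl0, hl⟩ := exists_measure_lt_ne_zero_of_not_ae_eq_zero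
    (g := fun x => ENNReal.ofReal |f x|) fun h => hne (h.mono fun x hx => by simpa using hx)
  obtain ⟨c, -, hc0, hc⟩ := ENNReal.lt_iff_exists_real_btwn.1 (pos_iff_ne_zero.2 hl)
  have hc0 : 0 < c := ENNReal.ofReal_pos.1 hc0
  refine hf (top_le_iff.1 ?_)
  calc ⊤ = l * ∫⁻ t in Ioo 0 c,
        (ENNReal.ofReal (Real.log (1 + 1 / t)))⁻¹ * (ENNReal.ofReal t)⁻¹ := by
        rw [lintegral_inv_log_one_add_inv_mul_inv_eq_top hc0, ENNReal.mul_top hl0.ne']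
    _ ≤ ∫⁻ t in Ioo 0 c, l * ((ENNReal.ofReal (Real.log (1 + 1 / t)))⁻¹ * (ENNReal.ofReal t)⁻¹) :=
        lintegral_const_mul_le _ _
    _ ≤ ∫⁻ t in Ioo 0 c,
        (yinv expYoung (ENNReal.ofReal t)⁻¹)⁻¹ * rearr f t * (ENNReal.ofReal t)⁻¹ := by
        refine setLIntegral_mono' measurableSet_Ioo fun t ht => ?_
        rw [yinv_expYoung_ofReal_inv ht.1, mul_comm _ (rearr f t), mul_assoc]
        gcongr
        exact le_rearr_of_ofReal_lt_volume (((ENNReal.ofReal_lt_ofReal_iff hc0).2 ht.2).trans hc)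
    _ ≤ _ := lintegral_mono_set Ioo_subset_Ioi_self

/-- for `Φ(t)=eᵗ-1` one has `Φ⁻¹(u)=log(1+u)`, the integral
`∫₀^{|E|} (log(1+1/u))⁻¹ du/u` diverges whenever `0 < |E| ≤ 1/2`, and consequently
`L^{Φ,1} = {0}`. -/
theorem stmt11 (n : ℕ) :
    (∀ u : ℝ≥0∞, u ≠ ⊤ → yinv expYoung u = ENNReal.ofReal (Real.log (1 + u.toReal))) ∧
    (∀ E : Set (EuclideanSpace ℝ (Fin n)), MeasurableSet E →
      0 < volume E → volume E ≤ ENNReal.ofReal (1 / 2) →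
      ∫⁻ u in Set.Ioo (0 : ℝ) (volume E).toReal,
        (ENNReal.ofReal (Real.log (1 + 1 / u)))⁻¹ * (ENNReal.ofReal u)⁻¹ = ⊤) ∧
    (∀ f : EuclideanSpace ℝ (Fin n) → ℝ, Measurable f →
      (∫⁻ t in Set.Ioi (0 : ℝ),
          (yinv expYoung (ENNReal.ofReal t)⁻¹)⁻¹ * rearr f t *
            (ENNReal.ofReal t)⁻¹) ≠ ⊤ →
      f =ᵐ[volume] 0) := by
  refine ⟨yinv_expYoung, fun E _ hE0 hE => ?_, fun f _ hf => ?_⟩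
  · exact lintegral_inv_log_one_add_inv_mul_inv_eq_top
      (ENNReal.toReal_pos hE0.ne' (ne_top_of_le_ne_top ENNReal.ofReal_ne_top hE))
  · exact ae_eq_zero_of_lintegral_yinv_expYoung_rearr_ne_top hf
end
end

section
/- Let Φ be a Young function. If Φ(λr) ≤ λᵖΦ(r) for all r ≥ 0 and 0 < λ < 1 with 1 < p < ∞, then the complementary function satisfies Φ̃(μs) ≤ μ^{p′}Φ̃(s) for all s ≥ 0 and μ > 1, where p′ = p/(p−1). In particular p₋(Φ) > 1 implies p₊(Φ̃) ≤ p₋(Φ)′. -/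
open MeasureTheory ENNReal NNReal

noncomputable section

/-- The complementary Young function `Φ̃(r) = sup_{s ∈ [0,∞)} (rs - Φ(s))`. -/
def complFn (Φ : ℝ≥0∞ → ℝ≥0∞) (r : ℝ≥0∞) : ℝ≥0∞ :=
  ⨆ s : ℝ≥0, r * (s : ℝ≥0∞) - Φ (s : ℝ≥0∞)

/- With `p'` the conjugate exponent and `λ = μ^{1-p'} < 1`, one has `μ = μ^{p'} λ` and
`μ^{p'} λ^p = 1`, so the hypothesis gives `μ^{p'} Φ(λt) ≤ Φ(t)`. Hence every term of the
supremum defining `Φ̃(μs)` is bounded by a term of `μ^{p'} Φ̃(s)`: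
`μst - Φ(t) ≤ μ^{p'} (s(λt) - Φ(λt))`. -/

theorem complFn_mul_le_mul_complFn {Φ : ℝ≥0∞ → ℝ≥0∞} {c m : ℝ≥0∞} {l : ℝ≥0}
    (hcl : c * l = m) (hΦ : ∀ t : ℝ≥0, c * Φ (l * t) ≤ Φ t) (s : ℝ≥0∞) :
    complFn Φ (m * s) ≤ c * complFn Φ s := by
  refine iSup_le fun t => ?_
  have hmst : m * s * t = c * (s * (l * t)) := by rw [← hcl]; ring
  calc m * s * t - Φ t ≤ c * (s * (l * t)) - c * Φ (l * t) := tsub_le_tsub hmst.le (hΦ t)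
    _ ≤ c * (s * (l * t) - Φ (l * t)) := le_mul_tsub
    _ ≤ c * complFn Φ s := by
        gcongr
        simpa only [complFn, coe_mul] using le_iSup (fun u : ℝ≥0 => s * u - Φ u) (l * t)

theorem NNReal.rpow_mul_rpow_one_sub {q : ℝ} {m : ℝ≥0} (hm : m ≠ 0) :
    m ^ q * m ^ (1 - q) = m := by
  rw [← NNReal.rpow_add hm, add_sub_cancel, NNReal.rpow_one]

theorem NNReal.rpow_mul_rpow_one_sub_rpow {p q : ℝ} (hpq : p.HolderConjugate q) {m : ℝ≥0}
    (hm : m ≠ 0) : m ^ q * (m ^ (1 - q)) ^ p = 1 := by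
  have hexp : q + (1 - q) * p = 0 := by linear_combination -hpq.mul_eq_add
  rw [← NNReal.rpow_mul, ← NNReal.rpow_add hm, hexp, NNReal.rpow_zero]

theorem stmt17_general (Φ : ℝ≥0∞ → ℝ≥0∞) (p : ℝ) (hp : 1 < p)
    (hdown : ∀ (r l : ℝ≥0), 0 < l → l < 1 →
      Φ ((l : ℝ≥0∞) * (r : ℝ≥0∞)) ≤ (l : ℝ≥0∞) ^ p * Φ (r : ℝ≥0∞)) :
    ∀ (s m : ℝ≥0), 1 < m →
      complFn Φ ((m : ℝ≥0∞) * (s : ℝ≥0∞)) ≤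
        (m : ℝ≥0∞) ^ (p / (p - 1)) * complFn Φ (s : ℝ≥0∞) := by
  intro s m hm
  set q := p / (p - 1)
  have hpq : p.HolderConjugate q := .conjExponent hp
  have hm0 : m ≠ 0 := (zero_lt_one.trans hm).ne'
  set l : ℝ≥0 := m ^ (1 - q)
  have hl0 : 0 < l := NNReal.rpow_pos (zero_lt_one.trans hm)
  have hl1 : l < 1 := NNReal.rpow_lt_one_of_one_lt_of_neg hm (by linarith [hpq.symm.lt])
  rw [← coe_rpow_of_nonneg _ hpq.symm.nonneg]
  refine complFn_mul_le_mul_complFn (l := l) ?_ (fun t => ?_) s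
  · exact_mod_cast NNReal.rpow_mul_rpow_one_sub hm0
  · calc ((m ^ q : ℝ≥0) : ℝ≥0∞) * Φ (l * t) ≤ ↑(m ^ q) * ((l : ℝ≥0∞) ^ p * Φ t) := by
          gcongr; exact hdown t l hl0 hl1
      _ = Φ t := by
          rw [← coe_rpow_of_nonneg _ hpq.nonneg, ← mul_assoc, ← coe_mul,
            NNReal.rpow_mul_rpow_one_sub_rpow hpq hm0, ENNReal.coe_one, one_mul]

/-- if `Φ(λr) ≤ λᵖΦ(r)` for all `0 < λ < 1` (with `1 < p < ∞`), then
`Φ̃(μs) ≤ μ^{p'}Φ̃(s)` for all `μ > 1`, where `p' = p/(p-1)`. -/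
theorem stmt17 (Φ : ℝ≥0∞ → ℝ≥0∞) (hΦ : YoungFunction Φ) (p : ℝ) (hp : 1 < p)
    (hdown : ∀ (r l : ℝ≥0), 0 < l → l < 1 →
      Φ ((l : ℝ≥0∞) * (r : ℝ≥0∞)) ≤ (l : ℝ≥0∞) ^ p * Φ (r : ℝ≥0∞)) :
    ∀ (s m : ℝ≥0), 1 < m →
      complFn Φ ((m : ℝ≥0∞) * (s : ℝ≥0∞)) ≤
        (m : ℝ≥0∞) ^ (p / (p - 1)) * complFn Φ (s : ℝ≥0∞) :=
  stmt17_general Φ p hp hdown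
end
end

section
/- Let Φ be a Young function and 1/p₋(Φ) ≤ θ < ∞, and define Φ_θ(r) = ∫₀^{r^θ} Φ(t)/t dt. Then Φ_θ is a Young function, and θ·p₋(Φ) ≤ p₋(Φ_θ) ≤ p₊(Φ_θ) ≤ θ·p₊(Φ). Moreover, for θ = 1, Φ₁(r) ≤ Φ(r) ≤ Φ₁(2r) for all r > 0, so the Orlicz norms ‖·‖_{L^Φ} and ‖·‖_{L^{Φ₁}} are equivalent. -/
open MeasureTheory ENNReal NNReal

noncomputable section

/-- `Φ_θ(r) = ∫₀^{r^θ} Φ(t)/t dt`. -/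
def phiTheta (Φ : ℝ≥0∞ → ℝ≥0∞) (θ : ℝ) (r : ℝ≥0) : ℝ≥0∞ :=
  ∫⁻ t in Set.Ioo (0 : ℝ) ((r : ℝ) ^ θ), Φ (ENNReal.ofReal t) / ENNReal.ofReal t

/-- The Orlicz (Luxemburg) norm with respect to `Ψ`. -/
def orliczNorm {n : ℕ} (Ψ : ℝ≥0 → ℝ≥0∞) (f : (Fin n → ℝ) → ℝ≥0) : ℝ≥0∞ :=
  sInf ((fun c : ℝ≥0 => (c : ℝ≥0∞)) ''
    {c : ℝ≥0 | 0 < c ∧ (∫⁻ x, Ψ (f x / c)) ≤ 1})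

/-!
Substituting `t = s ^ θ` writes `Φ_θ(r) = ∫₀^r θ Φ(s^θ)/s ds`. When `θ p ≥ 1` the lower
`p`-scaling of `Φ` makes this integrand nondecreasing, and the primitive of a nondecreasing
function is convex. The scaling bounds follow from the linear substitution `t = l^θ u` in the
definition of `Φ_θ`. For `θ = 1` the integrand `Φ(t)/t` is nondecreasing by convexity of `Φ`, so
`∫₀^r Φ(t)/t dt ≤ Φ(r) ≤ ∫_r^{2r} Φ(t)/t dt`, and comparable Young functions have comparable
Luxemburg norms.
-/

open Set

section MonotoneIntegrand

variable {g : ℝ → ℝ≥0∞}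

lemma MonotoneOn.setLIntegral_Ioc_le_mul (hg : MonotoneOn g (Ioi 0)) {X M : ℝ} (hX : 0 ≤ X) :
    ∫⁻ t in Ioc X M, g t ≤ g M * ENNReal.ofReal (M - X) :=
  calc ∫⁻ t in Ioc X M, g t ≤ ∫⁻ _ in Ioc X M, g M :=
        setLIntegral_mono' measurableSet_Ioc fun t ht =>
          hg (hX.trans_lt ht.1) (hX.trans_lt (ht.1.trans_le ht.2)) ht.2
    _ = g M * ENNReal.ofReal (M - X) := by rw [setLIntegral_const, Real.volume_Ioc]

lemma MonotoneOn.mul_le_setLIntegral_Ioc (hg : MonotoneOn g (Ioi 0)) {M Y : ℝ} (hM : 0 < M) :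
    g M * ENNReal.ofReal (Y - M) ≤ ∫⁻ t in Ioc M Y, g t :=
  calc g M * ENNReal.ofReal (Y - M) = ∫⁻ _ in Ioc M Y, g M := by
        rw [setLIntegral_const, Real.volume_Ioc]
    _ ≤ ∫⁻ t in Ioc M Y, g t :=
        setLIntegral_mono' measurableSet_Ioc fun t ht => hg hM (hM.trans ht.1) ht.1.le

lemma setLIntegral_Ioc_add_Ioc {a b c : ℝ} (hab : a ≤ b) (hbc : b ≤ c) :
    ∫⁻ t in Ioc a c, g t = (∫⁻ t in Ioc a b, g t) + ∫⁻ t in Ioc b c, g t := by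
  rw [← Ioc_union_Ioc_eq_Ioc hab hbc,
    lintegral_union measurableSet_Ioc (Ioc_disjoint_Ioc_of_le le_rfl)]

lemma MonotoneOn.setLIntegral_Ioc_zero_convex (hg : MonotoneOn g (Ioi 0)) {a b : ℝ≥0}
    (hab : a + b = 1) {X Y : ℝ} (hX : 0 ≤ X) (hY : 0 ≤ Y) :
    ∫⁻ t in Ioc 0 (a * X + b * Y), g t ≤
      a * (∫⁻ t in Ioc 0 X, g t) + b * ∫⁻ t in Ioc 0 Y, g t := by
  wlog hXY : X ≤ Y generalizing a b X Y
  · rw [add_comm (a * X : ℝ), add_comm ((a : ℝ≥0∞) * _)]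
    exact this (by rwa [add_comm] at hab) hY hX (le_of_not_ge hXY)
  have hab' : (a : ℝ) + b = 1 := mod_cast hab
  set M := a * X + b * Y
  have hXM : X ≤ M := by nlinarith [a.coe_nonneg, b.coe_nonneg]
  have hMY : M ≤ Y := by nlinarith [a.coe_nonneg, b.coe_nonneg]
  obtain hM0 | hM0 := (hX.trans hXM).eq_or_lt
  · simp [← hM0]
  set I := fun u v => ∫⁻ t in Ioc u v, g t
  have split {u v w : ℝ} (huv : u ≤ v) (hvw : v ≤ w) : I u w = I u v + I v w :=
    setLIntegral_Ioc_add_Ioc huv hvw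
  -- `a (M - X) = b (Y - M)`: the mass moved from `[X, M]` fits under `g ≥ g M` on `[M, Y]`
  have transfer : a * I X M ≤ b * I M Y := by
    have hweights : (a : ℝ≥0∞) * ENNReal.ofReal (M - X) = b * ENNReal.ofReal (Y - M) := by
      rw [← ofReal_coe_nnreal, ← ofReal_coe_nnreal, ← ofReal_mul a.coe_nonneg,
        ← ofReal_mul b.coe_nonneg]
      congr 1
      linear_combination M * hab'
    calc a * I X M ≤ a * (g M * ENNReal.ofReal (M - X)) := by
          gcongr; exact hg.setLIntegral_Ioc_le_mul hX
      _ = g M * (b * ENNReal.ofReal (Y - M)) := by rw [← hweights]; ring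
      _ ≤ b * I M Y := by
          rw [mul_left_comm]; gcongr; exact hg.mul_le_setLIntegral_Ioc hM0
  have hab_ennreal : (a : ℝ≥0∞) + b = 1 := mod_cast hab
  change I 0 M ≤ a * I 0 X + b * I 0 Y
  rw [split hX hXM, split (hX.trans hXM) hMY, split hX hXM]
  calc I 0 X + I X M = (a + b) * (I 0 X + I X M) := by rw [hab_ennreal, one_mul]
    _ = a * I 0 X + b * (I 0 X + I X M) + a * I X M := by ring
    _ ≤ a * I 0 X + b * (I 0 X + I X M) + b * I M Y := by gcongr
    _ = a * I 0 X + b * (I 0 X + I X M + I M Y) := by ring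

end MonotoneIntegrand

variable {Φ : ℝ≥0∞ → ℝ≥0∞}

lemma YoungFunction.map_mul_le (hΦ : YoungFunction Φ) {l : ℝ≥0} (hl : l ≤ 1) (x : ℝ≥0∞) :
    Φ (l * x) ≤ l * Φ x := by
  simpa [hΦ.map_zero] using hΦ.convex l (1 - l) x 0 (add_tsub_cancel_of_le hl)

/-- The integrand of `Φ_θ` after the substitution `t = s ^ θ`. -/
def phiThetaDensity (Φ : ℝ≥0∞ → ℝ≥0∞) (θ s : ℝ) : ℝ≥0∞ :=
  ENNReal.ofReal θ * Φ (ENNReal.ofReal (s ^ θ)) / ENNReal.ofReal s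

lemma phiThetaDensity_one (s : ℝ) :
    phiThetaDensity Φ 1 s = Φ (ENNReal.ofReal s) / ENNReal.ofReal s := by
  simp [phiThetaDensity]

lemma phiTheta_eq_setLIntegral_density {θ : ℝ} (hθ : 0 < θ) (r : ℝ≥0) :
    phiTheta Φ θ r = ∫⁻ s in Ioc 0 (r : ℝ), phiThetaDensity Φ θ s := by
  have hmono : StrictMonoOn (· ^ θ : ℝ → ℝ) (Icc 0 r) :=
    (Real.strictMonoOn_rpow_Ici_of_exponent_pos hθ).mono Icc_subset_Ici_self
  have himage : (· ^ θ : ℝ → ℝ) '' Ioo 0 r = Ioo 0 ((r : ℝ) ^ θ) := by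
    simpa [Real.zero_rpow hθ.ne'] using (Real.continuous_rpow_const hθ.le).continuousOn
      |>.image_Ioo_of_strictMonoOn r.coe_nonneg hmono
  rw [phiTheta, ← himage, lintegral_image_eq_lintegral_abs_deriv_mul measurableSet_Ioo
      (fun s hs => (Real.hasDerivAt_rpow_const (Or.inl hs.1.ne')).hasDerivWithinAt)
      (hmono.injOn.mono Ioo_subset_Icc_self), setLIntegral_congr Ioo_ae_eq_Ioc]
  refine setLIntegral_congr_fun measurableSet_Ioc fun s hs => ?_
  have hs0 : 0 < s := hs.1
  have hsθ : 0 < s ^ θ := Real.rpow_pos_of_pos hs0 θ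
  rw [abs_of_pos (by positivity), Real.rpow_sub_one hs0.ne', ofReal_mul hθ.le,
    ofReal_div_of_pos hs0, phiThetaDensity]
  simp only [div_eq_mul_inv]
  calc ENNReal.ofReal θ * (ENNReal.ofReal (s ^ θ) * (ENNReal.ofReal s)⁻¹) *
        (Φ (ENNReal.ofReal (s ^ θ)) * (ENNReal.ofReal (s ^ θ))⁻¹)
      = ENNReal.ofReal θ * Φ (ENNReal.ofReal (s ^ θ)) * (ENNReal.ofReal s)⁻¹ *
        (ENNReal.ofReal (s ^ θ) * (ENNReal.ofReal (s ^ θ))⁻¹) := by ring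
    _ = _ := by rw [ENNReal.mul_inv_cancel (by simpa) ofReal_ne_top, mul_one]

/-- For `s < t`, `Φ(s^θ) ≤ (s/t)^(θq) Φ(t^θ) ≤ (s/t) Φ(t^θ)` since `θ q ≥ 1`. -/
lemma phiThetaDensity_monotoneOn {θ q : ℝ} (hθ : 0 < θ) (hθq : 1 ≤ θ * q)
    (hq : ∀ (r l : ℝ≥0), 0 < l → l < 1 →
      Φ ((l : ℝ≥0∞) * (r : ℝ≥0∞)) ≤ (l : ℝ≥0∞) ^ q * Φ (r : ℝ≥0∞)) :
    MonotoneOn (phiThetaDensity Φ θ) (Ioi 0) := by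
  intro s (hs : 0 < s) t (ht : 0 < t) hst
  obtain rfl | hst := hst.eq_or_lt
  · rfl
  have hl0 : 0 < s / t := div_pos hs ht
  have hl1 : s / t < 1 := (div_lt_one ht).mpr hst
  have hlθ : 0 < (s / t) ^ θ := Real.rpow_pos_of_pos hl0 θ
  have hscale : Φ (ENNReal.ofReal (s ^ θ)) ≤
      ENNReal.ofReal (s / t) * Φ (ENNReal.ofReal (t ^ θ)) := by
    have h : Φ (ENNReal.ofReal ((s / t) ^ θ) * ENNReal.ofReal (t ^ θ)) ≤
        ENNReal.ofReal ((s / t) ^ θ) ^ q * Φ (ENNReal.ofReal (t ^ θ)) :=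
      hq (t ^ θ).toNNReal ((s / t) ^ θ).toNNReal (Real.toNNReal_pos.mpr hlθ)
        (by simpa using Real.rpow_lt_one hl0.le hl1 hθ)
    simp only [← ofReal_mul hlθ.le, ← Real.mul_rpow hl0.le ht.le,
      div_mul_cancel₀ s ht.ne', ofReal_rpow_of_pos hlθ, ← Real.rpow_mul hl0.le] at h
    refine h.trans (mul_le_mul_left (ofReal_le_ofReal ?_) _)
    simpa using Real.rpow_le_rpow_of_exponent_ge hl0 hl1.le hθq
  rw [ofReal_div_of_pos ht] at hscale
  rw [phiThetaDensity, phiThetaDensity]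
  refine ENNReal.div_le_of_le_mul ?_
  calc ENNReal.ofReal θ * Φ (ENNReal.ofReal (s ^ θ))
      ≤ ENNReal.ofReal θ * (ENNReal.ofReal s / ENNReal.ofReal t * Φ (ENNReal.ofReal (t ^ θ))) := by
        gcongr
    _ = _ := by simp only [div_eq_mul_inv]; ring

lemma phiTheta_monotone {θ : ℝ} (hθ : 0 ≤ θ) : Monotone (phiTheta Φ θ) := fun _ _ h =>
  lintegral_mono_set <| Ioo_subset_Ioo_right <| Real.rpow_le_rpow (coe_nonneg _) h hθ

lemma phiTheta_zero {θ : ℝ} (hθ : θ ≠ 0) : phiTheta Φ θ 0 = 0 := by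
  simp [phiTheta, Real.zero_rpow hθ]

lemma phiTheta_convex {θ q : ℝ} (hθ : 0 < θ) (hθq : 1 ≤ θ * q)
    (hq : ∀ (r l : ℝ≥0), 0 < l → l < 1 →
      Φ ((l : ℝ≥0∞) * (r : ℝ≥0∞)) ≤ (l : ℝ≥0∞) ^ q * Φ (r : ℝ≥0∞))
    {a b : ℝ≥0} (hab : a + b = 1) (x y : ℝ≥0) :
    phiTheta Φ θ (a * x + b * y) ≤ a * phiTheta Φ θ x + b * phiTheta Φ θ y := by
  simp only [phiTheta_eq_setLIntegral_density hθ, NNReal.coe_add, NNReal.coe_mul]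
  exact (phiThetaDensity_monotoneOn hθ hθq hq).setLIntegral_Ioc_zero_convex hab
    x.coe_nonneg y.coe_nonneg

lemma setLIntegral_Ioo_zero_mul (g : ℝ → ℝ≥0∞) {c : ℝ} (hc : 0 < c) (R : ℝ) :
    ∫⁻ t in Ioo 0 (c * R), g t = ∫⁻ u in Ioo 0 R, ENNReal.ofReal c * g (c * u) := by
  have himage : (c * ·) '' Ioo 0 R = Ioo 0 (c * R) := by
    simpa using (OrderIso.mulLeft₀ c hc).image_Ioo 0 R
  rw [← himage, lintegral_image_eq_lintegral_abs_deriv_mul measurableSet_Ioo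
      (fun u _ => (hasDerivAt_const_mul c).hasDerivWithinAt)
      (mul_right_injective₀ hc.ne').injOn, abs_of_pos hc]

lemma phiTheta_mul_le {θ q : ℝ} {l : ℝ≥0} (hl : 0 < l)
    (hΦl : ∀ u : ℝ≥0, Φ ((l ^ θ : ℝ≥0) * (u : ℝ≥0∞)) ≤ ((l ^ θ : ℝ≥0) : ℝ≥0∞) ^ q * Φ u)
    (r : ℝ≥0) :
    phiTheta Φ θ (l * r) ≤ (l : ℝ≥0∞) ^ (θ * q) * phiTheta Φ θ r := by
  set L : ℝ≥0 := l ^ θ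
  have hL : 0 < L := NNReal.rpow_pos hl
  have hpoint (u : ℝ) (hu : 0 < u) :
      ENNReal.ofReal L * (Φ (ENNReal.ofReal (L * u)) / ENNReal.ofReal (L * u)) ≤
        (L : ℝ≥0∞) ^ q * (Φ (ENNReal.ofReal u) / ENNReal.ofReal u) := by
    rw [ofReal_mul L.coe_nonneg, ofReal_coe_nnreal, ← mul_div_assoc,
      ENNReal.mul_div_mul_left _ _ (by simpa using hL.ne') coe_ne_top, ← mul_div_assoc]
    exact ENNReal.div_le_div_right (hΦl u.toNNReal) _
  calc phiTheta Φ θ (l * r)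
      = ∫⁻ u in Ioo 0 ((r : ℝ) ^ θ),
          ENNReal.ofReal L * (Φ (ENNReal.ofReal (L * u)) / ENNReal.ofReal (L * u)) := by
        rw [phiTheta, ← setLIntegral_Ioo_zero_mul (fun t => Φ (ENNReal.ofReal t) / ENNReal.ofReal t)
          (NNReal.coe_pos.mpr hL), NNReal.coe_mul,
          Real.mul_rpow l.coe_nonneg r.coe_nonneg, NNReal.coe_rpow]
    _ ≤ ∫⁻ u in Ioo 0 ((r : ℝ) ^ θ), (L : ℝ≥0∞) ^ q * (Φ (ENNReal.ofReal u) / ENNReal.ofReal u) :=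
        setLIntegral_mono' measurableSet_Ioo fun u hu => hpoint u hu.1
    _ = (l : ℝ≥0∞) ^ (θ * q) * phiTheta Φ θ r := by
        rw [lintegral_const_mul' _ _ (by simp [hL.ne']), phiTheta, ENNReal.rpow_mul,
          ← ENNReal.coe_rpow_of_ne_zero hl.ne']

lemma YoungFunction.monotoneOn_div_self (hΦ : YoungFunction Φ) :
    MonotoneOn (fun s => Φ (ENNReal.ofReal s) / ENNReal.ofReal s) (Ioi 0) := by
  rw [← funext phiThetaDensity_one]
  exact phiThetaDensity_monotoneOn (q := 1) one_pos (by norm_num) fun r l _ hl => by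
    simpa using hΦ.map_mul_le hl.le r

lemma phiTheta_one_le (hΦ : YoungFunction Φ) (r : ℝ≥0) : phiTheta Φ 1 r ≤ Φ r := by
  obtain rfl | hr := eq_zero_or_pos r
  · simp [phiTheta_zero one_ne_zero]
  rw [phiTheta_eq_setLIntegral_density one_pos]
  simp only [phiThetaDensity_one]
  calc ∫⁻ s in Ioc 0 (r : ℝ), Φ (ENNReal.ofReal s) / ENNReal.ofReal s
      ≤ Φ (ENNReal.ofReal r) / ENNReal.ofReal r * ENNReal.ofReal (r - 0) :=
        hΦ.monotoneOn_div_self.setLIntegral_Ioc_le_mul le_rfl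
    _ = Φ r := by
        rw [sub_zero, ofReal_coe_nnreal, ENNReal.div_mul_cancel (by simpa using hr.ne') coe_ne_top]

lemma le_phiTheta_one_two_mul (hΦ : YoungFunction Φ) (r : ℝ≥0) :
    Φ r ≤ phiTheta Φ 1 (2 * r) := by
  obtain rfl | hr := eq_zero_or_pos r
  · simp [hΦ.map_zero]
  rw [phiTheta_eq_setLIntegral_density one_pos]
  simp only [phiThetaDensity_one]
  calc Φ r = Φ (ENNReal.ofReal r) / ENNReal.ofReal r * ENNReal.ofReal (2 * r - r) := by
        rw [two_mul, add_sub_cancel_right, ofReal_coe_nnreal,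
          ENNReal.div_mul_cancel (by simpa using hr.ne') coe_ne_top]
    _ ≤ ∫⁻ s in Ioc (r : ℝ) (2 * r), Φ (ENNReal.ofReal s) / ENNReal.ofReal s :=
        hΦ.monotoneOn_div_self.mul_le_setLIntegral_Ioc hr
    _ ≤ _ := lintegral_mono_set (Ioc_subset_Ioc_left r.coe_nonneg)

lemma orliczNorm_le_mul {n : ℕ} {Ψ₁ Ψ₂ : ℝ≥0 → ℝ≥0∞} {c : ℝ≥0} (hc : 0 < c)
    (h : ∀ s, Ψ₁ s ≤ Ψ₂ (c * s)) (f : (Fin n → ℝ) → ℝ≥0) :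
    orliczNorm Ψ₁ f ≤ c * orliczNorm Ψ₂ f := by
  rw [orliczNorm, orliczNorm]
  conv_rhs => rw [sInf_eq_iInf', ENNReal.mul_iInf_of_ne (by simpa using hc.ne') coe_ne_top]
  refine le_iInf fun ⟨_, ⟨d, ⟨_, hΨ₂⟩, hdv⟩⟩ =>
    sInf_le ⟨c * d, ⟨by positivity, ?_⟩, by simp [← hdv]⟩
  calc ∫⁻ x, Ψ₁ (f x / (c * d)) ≤ ∫⁻ x, Ψ₂ (f x / d) := lintegral_mono fun x => by
        simpa [← mul_div_assoc, mul_div_mul_left _ _ hc.ne'] using h (f x / (c * d))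
    _ ≤ 1 := hΨ₂

/-- for `1/p₋(Φ) ≤ θ < ∞`, `Φ_θ` is a Young function (monotone, vanishing
at `0`, convex), `θ p₋(Φ) ≤ p₋(Φ_θ) ≤ p₊(Φ_θ) ≤ θ p₊(Φ)` (expressed via admissible
exponents), and for `θ = 1` one has `Φ₁(r) ≤ Φ(r) ≤ Φ₁(2r)`, so the Orlicz norms for
`Φ` and `Φ₁` are equivalent. -/
theorem stmt19 (Φ : ℝ≥0∞ → ℝ≥0∞) (hΦ : YoungFunction Φ) (p θ : ℝ) (hp : 1 ≤ p)
    (hdown : ∀ (r l : ℝ≥0), 0 < l → l < 1 →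
      Φ ((l : ℝ≥0∞) * (r : ℝ≥0∞)) ≤ (l : ℝ≥0∞) ^ p * Φ (r : ℝ≥0∞))
    (hθ : 1 / p ≤ θ) :
    (Monotone (phiTheta Φ θ) ∧ phiTheta Φ θ 0 = 0 ∧
      ∀ (a b x y : ℝ≥0), a + b = 1 →
        phiTheta Φ θ (a * x + b * y) ≤
          (a : ℝ≥0∞) * phiTheta Φ θ x + (b : ℝ≥0∞) * phiTheta Φ θ y) ∧
    (∀ p' : ℝ, (∀ (r l : ℝ≥0), 0 < l → l < 1 →
        Φ ((l : ℝ≥0∞) * (r : ℝ≥0∞)) ≤ (l : ℝ≥0∞) ^ p' * Φ (r : ℝ≥0∞)) →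
      ∀ (r l : ℝ≥0), 0 < l → l < 1 →
        phiTheta Φ θ (l * r) ≤ (l : ℝ≥0∞) ^ (θ * p') * phiTheta Φ θ r) ∧
    (∀ p' : ℝ, (∀ (r l : ℝ≥0), 1 < l →
        Φ ((l : ℝ≥0∞) * (r : ℝ≥0∞)) ≤ (l : ℝ≥0∞) ^ p' * Φ (r : ℝ≥0∞)) →
      ∀ (r l : ℝ≥0), 1 < l →
        phiTheta Φ θ (l * r) ≤ (l : ℝ≥0∞) ^ (θ * p') * phiTheta Φ θ r) ∧
    (∀ r : ℝ≥0, 0 < r →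
      phiTheta Φ 1 r ≤ Φ (r : ℝ≥0∞) ∧ Φ (r : ℝ≥0∞) ≤ phiTheta Φ 1 (2 * r)) ∧
    (∀ (nn : ℕ) (f : (Fin nn → ℝ) → ℝ≥0),
      orliczNorm (fun s => phiTheta Φ 1 s) f ≤ orliczNorm (fun s : ℝ≥0 => Φ (s : ℝ≥0∞)) f ∧
      orliczNorm (fun s : ℝ≥0 => Φ (s : ℝ≥0∞)) f ≤
        2 * orliczNorm (fun s => phiTheta Φ 1 s) f) := by
  have hp0 : 0 < p := one_pos.trans_le hp
  have hθ0 : 0 < θ := (one_div_pos.mpr hp0).trans_le hθ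
  have hθp : 1 ≤ θ * p := by rwa [div_le_iff₀ hp0] at hθ
  refine ⟨⟨phiTheta_monotone hθ0.le, phiTheta_zero hθ0.ne', fun a b x y hab =>
      phiTheta_convex hθ0 hθp hdown hab x y⟩, ?_, ?_,
    fun r _ => ⟨phiTheta_one_le hΦ r, le_phiTheta_one_two_mul hΦ r⟩, fun n f => ⟨?_, ?_⟩⟩
  · exact fun p' hp' r l hl0 hl1 => phiTheta_mul_le hl0
      (fun u => hp' u _ (NNReal.rpow_pos hl0) (NNReal.rpow_lt_one hl1 hθ0)) r
  · exact fun p' hp' r l hl1 => phiTheta_mul_le (one_pos.trans hl1)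
      (fun u => hp' u _ (NNReal.one_lt_rpow hl1 hθ0)) r
  · simpa using orliczNorm_le_mul one_pos (fun s => by simpa using phiTheta_one_le hΦ s) f
  · simpa using orliczNorm_le_mul two_pos (le_phiTheta_one_two_mul hΦ) f
end
end
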